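/- arXiv:0907.4737 — 4 statements merged into one kernel-verified Lean document; each statement's English description precedes it below -/
import Mathlib

section
/- Let P be a positive semidefinite operator on the tensor product of a 2-dimensional complex Hilbert space X and an arbitrary finite-dimensional complex Hilbert space Z. Then P ≤ 2·(1_X ⊗ Tr_X(P)), where Tr_X denotes the partial trace over X and 1_X is the identity on X. -/
open Kronecker ComplexOrder

/-- Partial trace over the first (2-dimensional) tensor factor. -/
noncomputable def ptraceX {n : ℕ} (M : Matrix (Fin 2 × Fin n) (Fin 2 × Fin n) ℂ) :
    Matrix (Fin n) (Fin n) ℂ :=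
  Matrix.of fun i j => ∑ a : Fin 2, M (a, i) (a, j)

open Matrix

/-- The three non-trivial Pauli matrices. -/
noncomputable def pauli : Fin 3 → Matrix (Fin 2) (Fin 2) ℂ
  | 0 => !![0, 1; 1, 0]
  | 1 => !![0, -Complex.I; Complex.I, 0]
  | 2 => !![1, 0; 0, -1]

theorem stmt_0 {n : ℕ} (P : Matrix (Fin 2 × Fin n) (Fin 2 × Fin n) ℂ)
    (hP : P.PosSemidef) :
    ((2 : ℂ) • ((1 : Matrix (Fin 2) (Fin 2) ℂ) ⊗ₖ ptraceX P) - P).PosSemidef := by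
  have key : (2 : ℂ) • ((1 : Matrix (Fin 2) (Fin 2) ℂ) ⊗ₖ ptraceX P) - P
      = ∑ k : Fin 3, (pauli k ⊗ₖ (1 : Matrix (Fin n) (Fin n) ℂ)) * P *
          (pauli k ⊗ₖ (1 : Matrix (Fin n) (Fin n) ℂ))ᴴ := by
    ext ⟨a, i⟩ ⟨b, j⟩
    simp [Matrix.mul_apply, Matrix.conjTranspose_apply, pauli, ptraceX,
      Fin.sum_univ_three, Fin.sum_univ_two, Fintype.sum_prod_type,
      Matrix.one_apply, mul_ite, ite_mul, Finset.mul_sum, Finset.sum_ite_eq,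
      Complex.conj_I]
    fin_cases a <;> fin_cases b <;>
      simp [apply_ite (starRingEnd ℂ), Complex.conj_I, Finset.sum_ite_eq, mul_ite] <;>
      ring_nf <;> simp [Complex.I_sq] <;> ring
  rw [key]
  apply Finset.sum_induction _ _ (fun a b => Matrix.PosSemidef.add) Matrix.PosSemidef.zero
  intro k _
  exact hP.mul_mul_conjTranspose_same _
end

section
/- Let P be a Hermitian operator satisfying 0 ≤ P ≤ 1 (identity), and let η > 0 be a real number. Then exp(ηP) ≤ 1 + η·exp(η)·P. -/
open ComplexOrder

lemma rc_ofReal (x : ℝ) : (RCLike.ofReal x : ℂ) = Complex.ofReal x := rfl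

lemma key_scalar (η t : ℝ) (hη : 0 < η) (ht0 : 0 ≤ t) (ht1 : t ≤ 1) :
    Real.exp (η * t) ≤ 1 + η * Real.exp η * t := by
  have h1 : Real.exp (η * t) * (1 - η * t) ≤ 1 := by
    have h := Real.add_one_le_exp (-(η * t))
    rw [Real.exp_neg] at h
    have hp := Real.exp_pos (η * t)
    have h2 := mul_le_mul_of_nonneg_left h hp.le
    rw [mul_inv_cancel₀ hp.ne'] at h2
    nlinarith
  have h2 : Real.exp (η * t) ≤ Real.exp η := Real.exp_le_exp.mpr (by nlinarith)
  nlinarith [Real.exp_pos (η * t), mul_nonneg (mul_nonneg hη.le ht0) (Real.exp_pos (η * t)).le]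

theorem stmt_1 {n : ℕ} (P : Matrix (Fin n) (Fin n) ℂ) (hP : P.PosSemidef)
    (hP1 : ((1 : Matrix (Fin n) (Fin n) ℂ) - P).PosSemidef) (η : ℝ) (hη : 0 < η) :
    ((1 : Matrix (Fin n) (Fin n) ℂ) + ((η * Real.exp η : ℝ) : ℂ) • P
      - NormedSpace.exp ((η : ℂ) • P)).PosSemidef := by
  classical
  have hH := hP.1
  set V : Matrix (Fin n) (Fin n) ℂ := (hH.eigenvectorUnitary : Matrix (Fin n) (Fin n) ℂ) with hVdef
  set μ : Fin n → ℝ := hH.eigenvalues with hμdef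
  have hV1 : star V * V = 1 := Unitary.coe_star_mul_self _
  have hV1' : V * star V = 1 := Unitary.coe_mul_star_self _
  have hVinv : V⁻¹ = star V := Matrix.inv_eq_left_inv hV1
  have hVunit : IsUnit V := ⟨⟨V, star V, hV1', hV1⟩, rfl⟩
  have hspec : P = V * Matrix.diagonal (RCLike.ofReal ∘ μ) * star V := hH.spectral_theorem
  -- eigenvalue bounds
  have hμ0 : ∀ i, 0 ≤ μ i := hP.eigenvalues_nonneg
  have hμ1 : ∀ i, μ i ≤ 1 := by
    intro i
    have h := hP1.re_dotProduct_nonneg (⇑(hH.eigenvectorBasis i))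
    rw [Matrix.sub_mulVec, dotProduct_sub, map_sub, Matrix.one_mulVec] at h
    have hnorm : RCLike.re (dotProduct (star ⇑(hH.eigenvectorBasis i))
        ⇑(hH.eigenvectorBasis i)) = 1 := by
      rw [dotProduct_comm, ← EuclideanSpace.inner_eq_star_dotProduct, inner_self_eq_norm_sq_to_K,
        hH.eigenvectorBasis.orthonormal.1 i]
      simp
    have heig := hH.eigenvalues_eq i
    rw [hnorm, ← heig] at h
    linarith
  -- exp computation
  have hexp : NormedSpace.exp ((η : ℂ) • P)
      = V * Matrix.diagonal (fun i => Complex.exp (η * μ i)) * star V := by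
    have h1 : (η : ℂ) • P = V * Matrix.diagonal (fun i => ((η * μ i : ℝ) : ℂ)) * V⁻¹ := by
      have hfun : (fun i => ((η * μ i : ℝ) : ℂ)) = (η : ℂ) • (RCLike.ofReal ∘ μ) := by
        funext i
        simp only [Pi.smul_apply, Function.comp_apply, smul_eq_mul, rc_ofReal]
        push_cast
        ring
      rw [hVinv, hspec, hfun, Matrix.diagonal_smul, mul_smul_comm, smul_mul_assoc]
    rw [h1, Matrix.exp_conj _ _ hVunit, Matrix.exp_diagonal, hVinv]
    have hfun2 : NormedSpace.exp (fun i => ((η * μ i : ℝ) : ℂ))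
        = fun i => Complex.exp (η * μ i) := by
      rw [Pi.exp_def]
      funext i
      rw [← Complex.exp_eq_exp_ℂ]
      norm_cast
    rw [hfun2]
  have hkey : (1 : Matrix (Fin n) (Fin n) ℂ) + ((η * Real.exp η : ℝ) : ℂ) • P
      - NormedSpace.exp ((η : ℂ) • P)
      = V * Matrix.diagonal (fun i =>
          ((1 + η * Real.exp η * μ i - Real.exp (η * μ i) : ℝ) : ℂ)) * star V := by
    rw [hexp]
    nth_rewrite 1 [hspec]
    have hone : (1 : Matrix (Fin n) (Fin n) ℂ) = V * 1 * star V := by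
      rw [Matrix.mul_one, hV1']
    nth_rewrite 1 [hone]
    rw [← smul_mul_assoc, ← mul_smul_comm, ← Matrix.diagonal_smul]
    rw [← Matrix.add_mul, ← Matrix.mul_add, ← Matrix.sub_mul, ← Matrix.mul_sub,
      ← Matrix.diagonal_one, Matrix.diagonal_add, Matrix.diagonal_sub]
    have hfun3 : (fun i => 1 + (((η * Real.exp η : ℝ) : ℂ) • (RCLike.ofReal ∘ μ)) i
          - Complex.exp (η * μ i))
        = fun i => ((1 + η * Real.exp η * μ i - Real.exp (η * μ i) : ℝ) : ℂ) := by
      funext i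
      simp only [Pi.add_apply, Pi.sub_apply, Pi.one_apply, Pi.smul_apply,
        Function.comp_apply, smul_eq_mul, rc_ofReal]
      push_cast [Complex.ofReal_exp]
      ring
    rw [hfun3]
  rw [hkey]
  refine (Matrix.posSemidef_diagonal_iff.mpr fun i => ?_).mul_mul_conjTranspose_same V
  rw [Complex.zero_le_real]
  have := key_scalar η (μ i) hη (hμ0 i) (hμ1 i)
  linarith
end

section
/- Let P be a Hermitian operator satisfying 0 ≤ P ≤ 1 (identity), and let η > 0 be a real number. Then exp(−ηP) ≤ 1 − η·exp(−η)·P. -/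
open ComplexOrder Matrix

lemma scalar_key {η x : ℝ} (hη : 0 < η) (hx0 : 0 ≤ x) (hx1 : x ≤ 1) :
    Real.exp (-η * x) ≤ 1 - η * Real.exp (-η) * x := by
  have hE : Real.exp (-η) * Real.exp η = 1 := by
    rw [← Real.exp_add]; simp
  have h1 : Real.exp (-η) * (1 + η) ≤ 1 := by
    nlinarith [Real.add_one_le_exp η, Real.exp_pos (-η)]
  have hcvx := convexOn_exp.2 (Set.mem_univ (0 : ℝ)) (Set.mem_univ (-η))
    (sub_nonneg.mpr hx1) hx0 (by ring : (1 - x) + x = 1)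
  simp only [smul_eq_mul, mul_zero, zero_add, Real.exp_zero, mul_one] at hcvx
  have h2 : Real.exp (-η * x) ≤ (1 - x) + x * Real.exp (-η) := by
    calc Real.exp (-η * x) = Real.exp ((1 - x) * 0 + x * (-η)) := by congr 1; ring
    _ ≤ (1 - x) + x * Real.exp (-η) := by simpa using hcvx
  nlinarith [Real.exp_pos (-η)]

theorem stmt_2 {n : ℕ} (P : Matrix (Fin n) (Fin n) ℂ) (hP : P.PosSemidef)
    (hP1 : ((1 : Matrix (Fin n) (Fin n) ℂ) - P).PosSemidef) (η : ℝ) (hη : 0 < η) :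
    ((1 : Matrix (Fin n) (Fin n) ℂ) - ((η * Real.exp (-η) : ℝ) : ℂ) • P
      - NormedSpace.exp ((-η : ℂ) • P)).PosSemidef := by
  have hH := hP.1
  set U : Matrix (Fin n) (Fin n) ℂ := (hH.eigenvectorUnitary : Matrix (Fin n) (Fin n) ℂ) with hUdef
  set μ : Fin n → ℝ := hH.eigenvalues with hμdef
  have hUU : U * star U = 1 := Matrix.mem_unitaryGroup_iff.mp hH.eigenvectorUnitary.2
  have hUU' : star U * U = 1 := Matrix.mem_unitaryGroup_iff'.mp hH.eigenvectorUnitary.2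
  have hUinv : U⁻¹ = star U := Matrix.inv_eq_left_inv hUU'
  have hUunit : IsUnit U := ⟨⟨U, star U, hUU, hUU'⟩, rfl⟩
  -- eigenvalue bounds
  have hμ0 : ∀ i, 0 ≤ μ i := hP.eigenvalues_nonneg
  have hμ1 : ∀ i, μ i ≤ 1 := by
    intro i
    have hv : star (⇑(hH.eigenvectorBasis i) : Fin n → ℂ) ⬝ᵥ ⇑(hH.eigenvectorBasis i) = 1 := by
      have h := inner_self_eq_norm_sq_to_K (𝕜 := ℂ) (hH.eigenvectorBasis i)
      rw [EuclideanSpace.inner_eq_star_dotProduct, hH.eigenvectorBasis.orthonormal.1 i] at h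
      rw [dotProduct_comm] at h; rw [h]; norm_num
    have hps := hP1.dotProduct_mulVec_nonneg (⇑(hH.eigenvectorBasis i))
    rw [Matrix.sub_mulVec, Matrix.one_mulVec, hH.mulVec_eigenvectorBasis,
      dotProduct_sub, hv, dotProduct_smul] at hps
    rw [hv] at hps
    simp at hps
    have : (0 : ℝ) ≤ 1 - μ i := by
      have := Complex.le_def.mp hps
      simpa using this.1
    linarith
  -- the scalar function applied to eigenvalues
  set c : ℝ := η * Real.exp (-η) with hcdef
  set f : Fin n → ℂ := fun i => 1 - (c : ℂ) * (μ i : ℂ) - Complex.exp (-η * μ i) with hfdef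
  have hf : ∀ i, 0 ≤ f i := by
    intro i
    have : f i = ((1 - c * μ i - Real.exp (-η * μ i) : ℝ) : ℂ) := by
      simp only [hfdef, Complex.ofReal_exp, Complex.ofReal_sub, Complex.ofReal_one,
        Complex.ofReal_mul, Complex.ofReal_neg]
    rw [this]
    rw [Complex.zero_le_real]
    have h2 := scalar_key hη (hμ0 i) (hμ1 i)
    rw [hcdef]
    linarith
  -- spectral decomposition
  have hspec : P = U * Matrix.diagonal (RCLike.ofReal ∘ μ) * star U := hH.spectral_theorem
  have hsmul : ((c : ℝ) : ℂ) • P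
      = U * Matrix.diagonal (fun i => (c : ℂ) * (μ i : ℂ)) * star U := by
    rw [hspec, ← Matrix.smul_mul, ← Matrix.mul_smul, ← Matrix.diagonal_smul]
    congr 2
  have hexp : NormedSpace.exp ((-η : ℂ) • P)
      = U * Matrix.diagonal (fun i => Complex.exp (-η * μ i)) * star U := by
    have h1 : ((-η : ℂ)) • P = U * Matrix.diagonal (fun i => (-η : ℂ) * (μ i : ℂ)) * U⁻¹ := by
      rw [hUinv, hspec, ← Matrix.smul_mul, ← Matrix.mul_smul, ← Matrix.diagonal_smul]
      congr 2
    rw [h1, Matrix.exp_conj U _ hUunit, Matrix.exp_diagonal, hUinv]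
    congr 2
    rw [Pi.exp_def]
    ext i
    rw [← Complex.exp_eq_exp_ℂ]
  have hone : (1 : Matrix (Fin n) (Fin n) ℂ) = U * Matrix.diagonal (fun _ => (1 : ℂ)) * star U := by
    rw [Matrix.diagonal_one, mul_one, hUU]
  have key : (1 : Matrix (Fin n) (Fin n) ℂ) - ((c : ℝ) : ℂ) • P
      - NormedSpace.exp ((-η : ℂ) • P) = U * Matrix.diagonal f * star U := by
    rw [hexp, hsmul]
    conv_lhs => rw [hone]
    rw [← Matrix.sub_mul, ← Matrix.mul_sub, ← Matrix.sub_mul, ← Matrix.mul_sub,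
      Matrix.diagonal_sub, Matrix.diagonal_sub]
  rw [key]
  have hfinal := (Matrix.posSemidef_diagonal_iff.mpr hf).mul_mul_conjTranspose_same U
  simpa [Matrix.star_eq_conjTranspose] using hfinal
end

section
/- Let A and B be positive definite operators on a finite-dimensional Hilbert space with ‖A − B‖ ≤ ε (spectral norm), and let Φ_A(Z) = Tr_Y(A^{−1/2} Z A^{−1/2}), Φ_B(Z) = Tr_Y(B^{−1/2} Z B^{−1/2}) define two semidefinite programs of the form: maximize Tr(X) subject to Φ(X) ≤ 1_X ⊗ σ, X ≥ 0, σ a density operator. If both optimal values are at most 1 and ‖A^{−1}‖, ‖B^{−1}‖ ≤ 1/ε, then the optimal values of the two programs differ by at most 2ε. -/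
open Matrix Kronecker ComplexOrder
open scoped Matrix.Norms.L2Operator

/-- Partial trace over the last tensor factor. -/
noncomputable def ptraceY {s y : Type*} [Fintype s] [Fintype y]
    (M : Matrix (s × y) (s × y) ℂ) : Matrix s s ℂ :=
  Matrix.of fun i j => ∑ c : y, M (i, c) (j, c)

/-- The square root of a positive semidefinite matrix, as `Matrix.PosSemidef.sqrt` was
defined in the older Mathlib (since removed). -/
noncomputable def Matrix.PosSemidef.sqrt' {n : Type*} [Fintype n] [DecidableEq n]
    {A : Matrix n n ℂ} (hA : A.PosSemidef) : Matrix n n ℂ :=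
  hA.1.eigenvectorUnitary.1 * diagonal ((↑) ∘ (√·) ∘ hA.1.eigenvalues) *
    (star hA.1.eigenvectorUnitary : Matrix n n ℂ)

section Aux
set_option linter.unusedSectionVars false
variable {n : Type*} [Fintype n] [DecidableEq n]

lemma Matrix.PosSemidef.sqrt'_isHermitian {A : Matrix n n ℂ} (hA : A.PosSemidef) :
    hA.sqrt'.IsHermitian := by
  unfold Matrix.PosSemidef.sqrt' Matrix.IsHermitian
  rw [conjTranspose_mul, conjTranspose_mul, diagonal_conjTranspose]
  have : star ((↑) ∘ (√·) ∘ hA.1.eigenvalues : n → ℂ) = ((↑) ∘ (√·) ∘ hA.1.eigenvalues) := by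
    funext i; simp
  rw [this]
  simp [← Matrix.star_eq_conjTranspose, Matrix.mul_assoc]

lemma Matrix.PosSemidef.sqrt'_mul_self {A : Matrix n n ℂ} (hA : A.PosSemidef) :
    hA.sqrt' * hA.sqrt' = A := by
  unfold Matrix.PosSemidef.sqrt'
  have hU : (star hA.1.eigenvectorUnitary : Matrix n n ℂ) * hA.1.eigenvectorUnitary.1 = 1 :=
    Unitary.coe_star_mul_self _
  have hD : diagonal ((↑) ∘ (√·) ∘ hA.1.eigenvalues : n → ℂ) *
      diagonal ((↑) ∘ (√·) ∘ hA.1.eigenvalues) = diagonal (RCLike.ofReal ∘ hA.1.eigenvalues) := by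
    rw [diagonal_mul_diagonal]
    congr 1; funext i
    simp only [Function.comp_apply, ← Complex.ofReal_mul,
      Real.mul_self_sqrt (hA.eigenvalues_nonneg i)]
    rfl
  conv_rhs => rw [hA.1.spectral_theorem, Unitary.conjStarAlgAut_apply]
  rw [← hD]
  simp only [Matrix.mul_assoc]
  rw [← Matrix.mul_assoc (star hA.1.eigenvectorUnitary : Matrix n n ℂ), hU, Matrix.one_mul]

lemma star_dp (u v : n → ℂ) : star (u ⬝ᵥ v) = star u ⬝ᵥ star v := by
  simp [dotProduct]

lemma herm_quad_real (M : Matrix n n ℂ) (hM : M.IsHermitian) (x : n → ℂ) :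
    star (star x ⬝ᵥ (M *ᵥ x)) = star x ⬝ᵥ (M *ᵥ x) := by
  rw [star_dp, star_star, star_mulVec, hM.eq, dotProduct_mulVec, dotProduct_comm]

lemma dp_self_im (x : n → ℂ) : (star x ⬝ᵥ x).im = 0 := by
  simp [dotProduct, Complex.im_sum, Pi.star_apply, RCLike.star_def, Complex.conj_mul',
    ← Complex.ofReal_pow]

lemma quad_abs_le (M : Matrix n n ℂ) (x : n → ℂ) :
    ‖(star x ⬝ᵥ (M *ᵥ x))‖ ≤ ‖M‖ * (star x ⬝ᵥ x).re := by
  let x' : EuclideanSpace ℂ n := (WithLp.equiv 2 _).symm x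
  let y' : EuclideanSpace ℂ n := (WithLp.equiv 2 _).symm (M *ᵥ x)
  have h1 : star x ⬝ᵥ (M *ᵥ x) = inner ℂ x' y' :=
    ((EuclideanSpace.inner_eq_star_dotProduct x' y').trans (dotProduct_comm _ _)).symm
  have h2 : ‖(inner ℂ x' y' : ℂ)‖ ≤ ‖x'‖ * ‖y'‖ := norm_inner_le_norm x' y'
  have h3 : ‖y'‖ ≤ ‖M‖ * ‖x'‖ := M.l2_opNorm_mulVec x'
  have h4 : ‖x'‖ * ‖x'‖ = (star x ⬝ᵥ x).re := by
    have : (inner ℂ x' x' : ℂ).re = ‖x'‖ ^ 2 := inner_self_eq_norm_sq (𝕜 := ℂ) x'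
    rw [← sq, ← this]
    exact congrArg Complex.re
      ((EuclideanSpace.inner_eq_star_dotProduct x' x').trans (dotProduct_comm _ _))
  rw [h1, ← h4]
  calc ‖(inner ℂ x' y' : ℂ)‖ ≤ ‖x'‖ * ‖y'‖ := h2
    _ ≤ ‖x'‖ * (‖M‖ * ‖x'‖) := mul_le_mul_of_nonneg_left h3 (norm_nonneg _)
    _ = ‖M‖ * (‖x'‖ * ‖x'‖) := by ring

lemma smul_one_sub_psd {M : Matrix n n ℂ} (hM : M.IsHermitian) :
    (((‖M‖ : ℂ)) • 1 - M).PosSemidef := by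
  refine PosSemidef.of_dotProduct_mulVec_nonneg ?_ ?_
  · unfold Matrix.IsHermitian
    rw [conjTranspose_sub, conjTranspose_smul, conjTranspose_one, hM.eq]
    simp
  · intro x
    have him : (star x ⬝ᵥ (M *ᵥ x)).im = 0 := by
      have := congrArg Complex.im (herm_quad_real M hM x)
      simp at this; linarith
    have hre : (star x ⬝ᵥ (M *ᵥ x)).re ≤ ‖M‖ * (star x ⬝ᵥ x).re :=
      le_trans (Complex.re_le_norm _) (quad_abs_le M x)
    have hx : star x ⬝ᵥ (((‖M‖ : ℂ) • 1 - M) *ᵥ x)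
        = (‖M‖ : ℂ) * (star x ⬝ᵥ x) - star x ⬝ᵥ (M *ᵥ x) := by
      rw [sub_mulVec, dotProduct_sub, smul_mulVec, one_mulVec, dotProduct_smul,
        smul_eq_mul]
    rw [hx, RCLike.nonneg_iff]
    constructor
    · simp only [Complex.sub_re, Complex.mul_re, Complex.ofReal_re, Complex.ofReal_im,
        RCLike.re_to_complex, dp_self_im, mul_zero, zero_mul, sub_zero]
      linarith
    · simp [Complex.sub_im, Complex.mul_im, him, dp_self_im]

lemma psd_trace_re_nonneg {M : Matrix n n ℂ} (hM : M.PosSemidef) : 0 ≤ M.trace.re := by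
  have h : ∀ i, 0 ≤ (M i i).re := by
    intro i
    have := hM.re_dotProduct_nonneg (Pi.single i 1)
    simpa [dotProduct, mulVec, Pi.single_apply, Finset.mul_sum] using this
  simp only [Matrix.trace, Matrix.diag, Complex.re_sum]
  exact Finset.sum_nonneg fun i _ => h i

lemma trace_mul_psd_nonneg {P Q : Matrix n n ℂ} (hP : P.PosSemidef) (hQ : Q.PosSemidef) :
    0 ≤ (P * Q).trace.re := by
  have hCH := hQ.sqrt'_isHermitian
  have key : (P * Q).trace = (hQ.sqrt' * P * hQ.sqrt').trace := by
    conv_lhs => rw [← hQ.sqrt'_mul_self]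
    rw [show P * (hQ.sqrt' * hQ.sqrt') = (P * hQ.sqrt') * hQ.sqrt' by rw [mul_assoc]]
    rw [trace_mul_comm, ← mul_assoc]
  rw [key]
  apply psd_trace_re_nonneg
  have := hP.mul_mul_conjTranspose_same hQ.sqrt'
  rwa [hCH.eq] at this

lemma trace_mul_re_le {M Z : Matrix n n ℂ} (hM : M.IsHermitian) (hZ : Z.PosSemidef) :
    (M * Z).trace.re ≤ ‖M‖ * Z.trace.re := by
  have h := trace_mul_psd_nonneg (smul_one_sub_psd hM) hZ
  have expand : (((‖M‖ : ℂ) • 1 - M) * Z) = (‖M‖ : ℂ) • Z - M * Z := by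
    rw [sub_mul, smul_mul_assoc, one_mul]
  rw [expand, trace_sub, trace_smul] at h
  simp only [Complex.sub_re, smul_eq_mul, Complex.mul_re, Complex.ofReal_re,
    Complex.ofReal_im, zero_mul, sub_zero] at h
  linarith

lemma helper1 (S X : Matrix n n ℂ) (h1 : S * S⁻¹ = 1) (h2 : S⁻¹ * S = 1) :
    ((S * S) * (S⁻¹ * X * S⁻¹)).trace = X.trace := by
  have e : (S * S) * (S⁻¹ * X * S⁻¹) = S * (X * S⁻¹) := by
    simp only [Matrix.mul_assoc]
    rw [← Matrix.mul_assoc S S⁻¹ (X * S⁻¹), h1, Matrix.one_mul]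
  rw [e, trace_mul_comm, Matrix.mul_assoc, h2, Matrix.mul_one]

lemma helper2 (S X : Matrix n n ℂ) (h1 : S * S⁻¹ = 1) (h2 : S⁻¹ * S = 1) :
    S⁻¹ * (S * X * S) * S⁻¹ = X := by
  simp only [Matrix.mul_assoc]
  rw [h1, Matrix.mul_one, ← Matrix.mul_assoc, h2, Matrix.one_mul]

lemma helper3 (S X : Matrix n n ℂ) : ((S * S) * X).trace = (S * X * S).trace := by
  rw [Matrix.mul_assoc, trace_mul_comm, Matrix.mul_assoc]

lemma sqrt_inv_mul {C : Matrix n n ℂ} (hC : C.PosDef) :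
    hC.posSemidef.sqrt'⁻¹ * hC.posSemidef.sqrt' = 1 ∧
    hC.posSemidef.sqrt' * hC.posSemidef.sqrt'⁻¹ = 1 := by
  have hdet : IsUnit hC.posSemidef.sqrt'.det := by
    have h1 : hC.posSemidef.sqrt'.det * hC.posSemidef.sqrt'.det = C.det := by
      rw [← det_mul, hC.posSemidef.sqrt'_mul_self]
    have h2 : C.det ≠ 0 := hC.det_pos.ne'
    have h3 : hC.posSemidef.sqrt'.det ≠ 0 := by
      intro h; rw [h, mul_zero] at h1; exact h2 h1.symm
    exact h3.isUnit
  exact ⟨nonsing_inv_mul _ hdet, mul_nonsing_inv _ hdet⟩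

end Aux

/-- The optimal value of the semidefinite program
"maximize `Tr X` subject to `Tr_Y (A^{-1/2} X A^{-1/2}) ≤ 1_X ⊗ σ`,
`X ≥ 0`, `σ` a density operator", defined for a positive definite `A`. -/
noncomputable def sdpVal {m k : ℕ}
    (A : Matrix ((Fin 2 × Fin m) × Fin k) ((Fin 2 × Fin m) × Fin k) ℂ)
    (hA : A.PosDef) : ℝ :=
  sSup {r : ℝ |
    ∃ (X : Matrix ((Fin 2 × Fin m) × Fin k) ((Fin 2 × Fin m) × Fin k) ℂ)
      (σ : Matrix (Fin m) (Fin m) ℂ),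
      X.PosSemidef ∧ σ.PosSemidef ∧ σ.trace = 1 ∧
      (((1 : Matrix (Fin 2) (Fin 2) ℂ) ⊗ₖ σ) -
        ptraceY (hA.posSemidef.sqrt'⁻¹ * X * hA.posSemidef.sqrt'⁻¹)).PosSemidef ∧
      (X.trace).re = r}

section Main
variable {m k : ℕ}

abbrev Idx (m k : ℕ) := (Fin 2 × Fin m) × Fin k

lemma ptraceY_trace (M : Matrix ((Fin 2 × Fin m) × Fin k) ((Fin 2 × Fin m) × Fin k) ℂ) :
    (ptraceY M).trace = M.trace := by
  simp only [ptraceY, Matrix.trace, Matrix.diag, Matrix.of_apply]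
  exact (Fintype.sum_prod_type (fun p => M p p)).symm

/-- Characterization of the feasible-value set. -/
lemma sdp_mem_iff (A : Matrix (Idx m k) (Idx m k) ℂ) (hA : A.PosDef) (r : ℝ) :
    (r ∈ {r : ℝ |
      ∃ (X : Matrix (Idx m k) (Idx m k) ℂ) (σ : Matrix (Fin m) (Fin m) ℂ),
      X.PosSemidef ∧ σ.PosSemidef ∧ σ.trace = 1 ∧
      (((1 : Matrix (Fin 2) (Fin 2) ℂ) ⊗ₖ σ) -
        ptraceY (hA.posSemidef.sqrt'⁻¹ * X * hA.posSemidef.sqrt'⁻¹)).PosSemidef ∧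
      (X.trace).re = r}) ↔
    (∃ (Z : Matrix (Idx m k) (Idx m k) ℂ) (σ : Matrix (Fin m) (Fin m) ℂ),
      Z.PosSemidef ∧ σ.PosSemidef ∧ σ.trace = 1 ∧
      (((1 : Matrix (Fin 2) (Fin 2) ℂ) ⊗ₖ σ) - ptraceY Z).PosSemidef ∧
      ((A * Z).trace).re = r) := by
  set S := hA.posSemidef.sqrt' with hS
  obtain ⟨hinv1, hinv2⟩ := sqrt_inv_mul hA
  have hSH : S.IsHermitian := hA.posSemidef.sqrt'_isHermitian
  have hSinvH : (S⁻¹).IsHermitian := hSH.inv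
  have hSS : S * S = A := hA.posSemidef.sqrt'_mul_self
  constructor
  · rintro ⟨X, σ, hX, hσ, hσtr, hcon, hr⟩
    refine ⟨S⁻¹ * X * S⁻¹, σ, ?_, hσ, hσtr, hcon, ?_⟩
    · have := hX.mul_mul_conjTranspose_same S⁻¹
      rwa [hSinvH.eq] at this
    · rw [← hSS, helper1 S X hinv2 hinv1, hr]
  · rintro ⟨Z, σ, hZ, hσ, hσtr, hcon, hr⟩
    refine ⟨S * Z * S, σ, ?_, hσ, hσtr, ?_, ?_⟩
    · have := hZ.mul_mul_conjTranspose_same S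
      rwa [hSH.eq] at this
    · rwa [helper2 S Z hinv2 hinv1]
    · rw [← hr, ← hSS, helper3]

lemma z_trace_le_two {Z : Matrix (Idx m k) (Idx m k) ℂ} {σ : Matrix (Fin m) (Fin m) ℂ}
    (hσtr : σ.trace = 1)
    (hcon : (((1 : Matrix (Fin 2) (Fin 2) ℂ) ⊗ₖ σ) - ptraceY Z).PosSemidef) :
    Z.trace.re ≤ 2 := by
  have h := psd_trace_re_nonneg hcon
  rw [trace_sub, trace_kronecker, hσtr, ptraceY_trace] at h
  simp only [trace_one, Complex.sub_re] at h
  norm_num at h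
  linarith

lemma sdp_le {ε : ℝ} (hε : 0 ≤ ε) (A B : Matrix (Idx m k) (Idx m k) ℂ)
    (hA : A.PosDef) (hB : B.PosDef) (hAB : ‖A - B‖ ≤ ε) :
    sdpVal A hA ≤ sdpVal B hB + 2 * ε := by
  have hBddB : BddAbove {r : ℝ |
      ∃ (X : Matrix (Idx m k) (Idx m k) ℂ) (σ : Matrix (Fin m) (Fin m) ℂ),
      X.PosSemidef ∧ σ.PosSemidef ∧ σ.trace = 1 ∧
      (((1 : Matrix (Fin 2) (Fin 2) ℂ) ⊗ₖ σ) -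
        ptraceY (hB.posSemidef.sqrt'⁻¹ * X * hB.posSemidef.sqrt'⁻¹)).PosSemidef ∧
      (X.trace).re = r} := by
    refine ⟨2 * ‖B‖, fun r hr => ?_⟩
    rw [sdp_mem_iff B hB] at hr
    obtain ⟨Z, σ, hZ, hσ, hσtr, hcon, hr⟩ := hr
    have h1 : (B * Z).trace.re ≤ ‖B‖ * Z.trace.re := trace_mul_re_le hB.1 hZ
    have h2 : Z.trace.re ≤ 2 := z_trace_le_two hσtr hcon
    have h3 : (0:ℝ) ≤ ‖B‖ := norm_nonneg _
    rw [← hr]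
    nlinarith
  have hnonnegB : (0:ℝ) ≤ sdpVal B hB := by
    apply Real.sSup_nonneg
    intro r hr
    rw [sdp_mem_iff B hB] at hr
    obtain ⟨Z, σ, hZ, _, _, _, hr⟩ := hr
    rw [← hr]
    exact trace_mul_psd_nonneg hB.posSemidef hZ
  apply Real.sSup_le _ (by linarith)
  intro r hr
  rw [sdp_mem_iff A hA] at hr
  obtain ⟨Z, σ, hZ, hσ, hσtr, hcon, hr⟩ := hr
  have hmem : ((B * Z).trace).re ∈ {r : ℝ |
      ∃ (X : Matrix (Idx m k) (Idx m k) ℂ) (σ : Matrix (Fin m) (Fin m) ℂ),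
      X.PosSemidef ∧ σ.PosSemidef ∧ σ.trace = 1 ∧
      (((1 : Matrix (Fin 2) (Fin 2) ℂ) ⊗ₖ σ) -
        ptraceY (hB.posSemidef.sqrt'⁻¹ * X * hB.posSemidef.sqrt'⁻¹)).PosSemidef ∧
      (X.trace).re = r} := by
    rw [sdp_mem_iff B hB]
    exact ⟨Z, σ, hZ, hσ, hσtr, hcon, rfl⟩
  have hle : ((B * Z).trace).re ≤ sdpVal B hB := le_csSup hBddB hmem
  have hdiff : ((A * Z).trace).re - ((B * Z).trace).re ≤ ε * Z.trace.re := by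
    have : ((A - B) * Z).trace.re ≤ ‖A - B‖ * Z.trace.re :=
      trace_mul_re_le (hA.1.sub hB.1) hZ
    rw [sub_mul, trace_sub, Complex.sub_re] at this
    have hz : (0:ℝ) ≤ Z.trace.re := psd_trace_re_nonneg hZ
    nlinarith
  have h2 : Z.trace.re ≤ 2 := z_trace_le_two hσtr hcon
  have hz : (0:ℝ) ≤ Z.trace.re := psd_trace_re_nonneg hZ
  rw [← hr]
  nlinarith

end Main

set_option maxHeartbeats 1000000 in
theorem stmt_19 {m k : ℕ} (ε : ℝ) (hε : 0 < ε)
    (A B : Matrix ((Fin 2 × Fin m) × Fin k) ((Fin 2 × Fin m) × Fin k) ℂ)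
    (hA : A.PosDef) (hB : B.PosDef)
    (hAB : ‖A - B‖ ≤ ε) (hAinv : ‖A⁻¹‖ ≤ 1 / ε) (hBinv : ‖B⁻¹‖ ≤ 1 / ε)
    (hvalA : sdpVal A hA ≤ 1) (hvalB : sdpVal B hB ≤ 1) :
    |sdpVal A hA - sdpVal B hB| ≤ 2 * ε := by
  have h1 := sdp_le hε.le A B hA hB hAB
  have h2 := sdp_le hε.le B A hB hA (by rwa [norm_sub_rev])
  rw [abs_sub_le_iff]
  constructor <;> linarith
end
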